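/- arXiv:2102.07481 — 3 statements merged into one kernel-verified Lean document; each statement's English description precedes it below -/
import Mathlib

section
/- Let m ∈ ℕ, let J^+ and J^− be disjoint finite index sets with |J^+| + |J^−| = 2m, let c_j : [0,1] → ℝ be continuous and strictly positive, and write e_λ^j(a,b) := exp(−λ∫_a^b dz/c_j(z)). Let B = (b_{ij}) be a componentwise nonnegative real 2m×2m matrix written in block form B = (B^{kl})_{k,l=1,2} according to the splitting (J^+, J^−), with column sums b_j^{kl} := Σ_i b_{ij}^{kl}. Let f = (f_j) ∈ (L^1(0,1))^{2m} with f_j ≥ 0 a.e., let λ > 0 be large enough that I − B·diag(e_λ^j(0,1)) is invertible with nonnegative inverse given by its Neumann series, let (u^0, w^0) ≥ 0 be determined by (I − B E_λ(0,1)) (u^0, w^0)^T = B (∫_0^1 e_λ^j(s,1) f_j(s)/c_j(s) ds for j∈J^+, ∫_0^1 e_λ^j(0,s) f_j(s)/c_j(s) ds for j∈J^−)^T, and define v_j(x) := e_λ^j(0,x) u_j^0 + ∫_0^x e_λ^j(s,x) f_j(s)/c_j(s) ds for j ∈ J^+ and w_j(x) := e_λ^j(x,1) w_j^0 + ∫_x^1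 e_λ^j(x,s) f_j(s)/c_j(s) ds for j ∈ J^−. Then, with ‖(v,w)‖_c := Σ_{j∈J^+} ∫_0^1 v_j(x)/c_j(x) dx + Σ_{j∈J^−} ∫_0^1 w_j(x)/c_j(x) dx, one has the identity ‖(v,w)‖_c = (1/λ) Σ_{j∈J^+} (b_j^{11} + b_j^{21} − 1)(u_j^0 e_λ^j(0,1) + ∫_0^1 e_λ^j(s,1) f_j(s)/c_j(s) ds) + (1/λ) Σ_{j∈J^−} (b_j^{12} + b_j^{22} − 1)(w_j^0 e_λ^j(0,1) + ∫_0^1 e_λ^j(0,s) f_j(s)/c_j(s) ds) + (1/λ) ‖f‖_c. -/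
open MeasureTheory Set Matrix

/-!
On a forward edge `v = e_λ(0,·) (u⁰ + ∫₀^· e_λ(0,s)⁻¹ f/c)` is the product of a `C¹` function and
an absolutely continuous one, with `v' = -λ v/c + f/c` a.e.; the fundamental theorem of calculus
for absolutely continuous functions gives the mass balance `λ ∫₀¹ v/c = v(0) - v(1) + ∫₀¹ f/c`.
Backward edges are forward edges after `x ↦ -x`. Summing the balances over all edges, the inflows
`u⁰ = B y` are determined by the outflows `y_j = e_λ^j(0,1) u⁰_j + ∫ …`, so `∑ u⁰ = ∑_j b_j y_j`
with `b_j` the `j`-th column sum of `B`.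
-/

section TransportResolvent

open Real

/-- Solves `v' = -λ φ v + g` with inflow `v a = u`; for `φ = 1/c`, `g = f/c` this is the resolvent
equation `λ v + c v' = f` of transport along an edge. -/
noncomputable def forwardResolvent (φ g : ℝ → ℝ) (lam a u x : ℝ) : ℝ :=
  exp (-(lam * ∫ z in a..x, φ z)) * u + ∫ s in a..x, exp (-(lam * ∫ z in s..x, φ z)) * g s

variable {φ g : ℝ → ℝ} {lam a b u : ℝ}

theorem forwardResolvent_eq_exp_mul (hφ : Continuous φ) (x : ℝ) :
    forwardResolvent φ g lam a u x = exp (-(lam * ∫ z in a..x, φ z)) *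
      (u + ∫ s in a..x, exp (lam * ∫ z in a..s, φ z) * g s) := by
  have hsplit (s : ℝ) : exp (-(lam * ∫ z in s..x, φ z)) =
      exp (-(lam * ∫ z in a..x, φ z)) * exp (lam * ∫ z in a..s, φ z) := by
    rw [← intervalIntegral.integral_interval_sub_left (hφ.intervalIntegrable _ _)
      (hφ.intervalIntegrable _ _), ← exp_add]
    ring_nf
  rw [forwardResolvent, mul_add, ← intervalIntegral.integral_const_mul (exp _)]
  congr 1
  exact intervalIntegral.integral_congr fun s _ => by rw [hsplit, mul_assoc]

theorem contDiff_primitive (hφ : Continuous φ) (a : ℝ) :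
    ContDiff ℝ 1 fun x => ∫ z in a..x, φ z :=
  contDiff_one_iff_deriv.2
    ⟨fun x => (hφ.integral_hasStrictDerivAt a x).hasDerivAt.differentiableAt,
      by rw [funext (Continuous.deriv_integral φ hφ a)]; exact hφ⟩

theorem mul_integral_mul_forwardResolvent (hφ : Continuous φ)
    (hg : IntervalIntegrable g volume a b) :
    lam * ∫ x in a..b, φ x * forwardResolvent φ g lam a u x
      = u - forwardResolvent φ g lam a u b + ∫ x in a..b, g x := by
  set Φ : ℝ → ℝ := fun x => ∫ z in a..x, φ z
  set E : ℝ → ℝ := fun x => exp (-(lam * Φ x))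
  set A : ℝ → ℝ := fun s => exp (lam * Φ s) * g s
  set F : ℝ → ℝ := fun x => u + ∫ s in a..x, A s
  have hsol : forwardResolvent φ g lam a u = E * F := funext (forwardResolvent_eq_exp_mul hφ)
  have hΦ : ContDiff ℝ 1 Φ := contDiff_primitive hφ a
  have hE : ContDiff ℝ 1 E := (contDiff_const.mul hΦ).neg.exp
  have hE' (x : ℝ) : HasDerivAt E (-(lam * φ x) * E x) x := by
    simpa only [mul_comm] using
      (((hφ.integral_hasStrictDerivAt a x).hasDerivAt.const_mul lam).fun_neg.exp)
  have hA : IntervalIntegrable A volume a b :=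
    hg.continuousOn_mul (continuous_const.mul hΦ.continuous).rexp.continuousOn
  have hFac : AbsolutelyContinuousOnInterval F a b :=
    contDiffOn_const.absolutelyContinuousOnInterval.add
      (hA.absolutelyContinuousOnInterval_intervalIntegral left_mem_uIcc)
  have hF' : ∀ᵐ x, x ∈ uIoc a b → deriv F x = A x := by
    filter_upwards [hA.ae_hasDerivAt_integral] with x hx hxab
    exact ((hx (uIoc_subset_uIcc hxab) a left_mem_uIcc).const_add u).deriv
  have hEA (x : ℝ) : E x * A x = g x := by
    simp only [E, A, ← mul_assoc, ← exp_add, neg_add_cancel, exp_zero, one_mul]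
  have hbalance := hE.contDiffOn.absolutelyContinuousOnInterval.integral_deriv_mul_eq_sub hFac
  rw [intervalIntegral.integral_congr_ae
    (hF'.mono fun x hx hxab => by rw [hx hxab, (hE' x).deriv, hEA])] at hbalance
  have hcont : ContinuousOn (fun x => φ x * (E x * F x)) (uIcc a b) :=
    hφ.continuousOn.mul (hE.continuous.continuousOn.mul hFac.continuousOn)
  have hint : ∫ x in a..b, (-(lam * (φ x * (E x * F x))) + g x)
      = -(lam * ∫ x in a..b, φ x * (E x * F x)) + ∫ x in a..b, g x := by
    rw [intervalIntegral.integral_add (f := fun x => -(lam * (φ x * (E x * F x))))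
      (hcont.intervalIntegrable.const_mul lam).neg hg, intervalIntegral.integral_neg,
      intervalIntegral.integral_const_mul]
  have hEa : E a = 1 := by simp [E, Φ]
  have hFa : F a = u := by simp [F]
  simp only [hEa, hFa, one_mul, neg_mul, mul_assoc] at hbalance
  rw [hsol]
  simp only [Pi.mul_apply]
  linarith

theorem exists_continuous_eqOn_Icc (hab : a ≤ b) (hφ : ContinuousOn φ (Icc a b)) :
    ∃ ψ : ℝ → ℝ, Continuous ψ ∧ EqOn ψ φ (Icc a b) :=
  ⟨IccExtend hab ((Icc a b).domRestrict φ), hφ.domRestrict.Icc_extend',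
    fun _ hx => IccExtend_of_mem hab _ hx⟩

theorem forwardResolvent_congr {ψ : ℝ → ℝ} (h : EqOn φ ψ (Icc a b)) {x : ℝ} (hx : x ∈ Icc a b) :
    forwardResolvent φ g lam a u x = forwardResolvent ψ g lam a u x := by
  have hsub : ∀ {s}, s ∈ uIcc a x → uIcc s x ⊆ Icc a b := fun hs =>
    uIcc_subset_Icc (uIcc_subset_Icc (left_mem_Icc.2 (hx.1.trans hx.2)) hx hs) hx
  rw [forwardResolvent, forwardResolvent,
    intervalIntegral.integral_congr (h.mono (hsub left_mem_uIcc))]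
  congr 1
  exact intervalIntegral.integral_congr fun s hs => by
    simp only [intervalIntegral.integral_congr (h.mono (hsub hs))]

theorem mul_integral_mul_forwardResolvent_of_continuousOn (hab : a ≤ b)
    (hφ : ContinuousOn φ (Icc a b)) (hg : IntervalIntegrable g volume a b) :
    lam * ∫ x in a..b, φ x * forwardResolvent φ g lam a u x
      = u - forwardResolvent φ g lam a u b + ∫ x in a..b, g x := by
  obtain ⟨ψ, hψ, hψφ⟩ := exists_continuous_eqOn_Icc hab hφ
  have hres : EqOn (forwardResolvent φ g lam a u) (forwardResolvent ψ g lam a u) (Icc a b) :=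
    fun x hx => forwardResolvent_congr hψφ.symm hx
  rw [hres (right_mem_Icc.2 hab), ← mul_integral_mul_forwardResolvent hψ hg]
  congr 1
  refine intervalIntegral.integral_congr fun x hx => ?_
  rw [uIcc_of_le hab] at hx
  simp only [hψφ hx, hres hx]

/-- Solves `w' = λ φ w - g` with inflow `w b = u`: transport in the direction of decreasing `x`. -/
noncomputable def backwardResolvent (φ g : ℝ → ℝ) (lam b u x : ℝ) : ℝ :=
  exp (-(lam * ∫ z in x..b, φ z)) * u + ∫ s in x..b, exp (-(lam * ∫ z in x..s, φ z)) * g s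

theorem backwardResolvent_eq_forwardResolvent_neg (x : ℝ) :
    backwardResolvent φ g lam b u x
      = forwardResolvent (fun z => φ (-z)) (fun z => g (-z)) lam (-b) u (-x) := by
  have hφ (s t : ℝ) : ∫ z in -t..-s, φ (-z) = ∫ z in s..t, φ z := by
    rw [intervalIntegral.integral_comp_neg, neg_neg, neg_neg]
  simp only [backwardResolvent, forwardResolvent, hφ]
  congr 1
  rw [← intervalIntegral.integral_comp_neg]
  simp only [hφ, neg_neg]

theorem mul_integral_mul_backwardResolvent_of_continuousOn (hab : a ≤ b)
    (hφ : ContinuousOn φ (Icc a b)) (hg : IntervalIntegrable g volume a b) :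
    lam * ∫ x in a..b, φ x * backwardResolvent φ g lam b u x
      = u - backwardResolvent φ g lam b u a + ∫ x in a..b, g x := by
  have hφ' : ContinuousOn (fun z => φ (-z)) (Icc (-b) (-a)) :=
    hφ.comp continuousOn_neg fun z hz => ⟨le_neg.1 hz.2, neg_le.1 hz.1⟩
  have hg' : IntervalIntegrable (fun z => g (-z)) volume (-b) (-a) :=
    ((IntervalIntegrable.iff_comp_neg (f := g) (a := a) (b := b)).1 hg).symm
  have key := mul_integral_mul_forwardResolvent_of_continuousOn (lam := lam) (u := u)
    (neg_le_neg hab) hφ' hg'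
  have hsub (F : ℝ → ℝ) : ∫ x in a..b, F (-x) = ∫ x in -b..-a, F x :=
    intervalIntegral.integral_comp_neg F
  simp only [backwardResolvent_eq_forwardResolvent_neg]
  rw [← hsub, ← hsub] at key
  simpa only [neg_neg] using key

section Speed

variable {c f : ℝ → ℝ}

theorem intervalIntegrable_div_of_integrableOn_Ioo (hab : a ≤ b) (hc : ContinuousOn c (Icc a b))
    (hc0 : ∀ x ∈ Icc a b, c x ≠ 0) (hf : IntegrableOn f (Ioo a b)) :
    IntervalIntegrable (fun x => f x / c x) volume a b := by
  have hf' : IntervalIntegrable f volume a b := by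
    rwa [intervalIntegrable_iff_integrableOn_Ioc_of_le hab, integrableOn_Ioc_iff_integrableOn_Ioo]
  simpa only [div_eq_inv_mul] using
    hf'.continuousOn_mul (by rw [uIcc_of_le hab]; exact hc.inv₀ hc0)

theorem integral_div_forwardResolvent (hab : a ≤ b) (hc : ContinuousOn c (Icc a b))
    (hc0 : ∀ x ∈ Icc a b, c x ≠ 0) (hf : IntegrableOn f (Ioo a b)) (hlam : lam ≠ 0) :
    ∫ x in a..b, forwardResolvent (fun z => (c z)⁻¹) (fun s => f s / c s) lam a u x / c x
      = (u - forwardResolvent (fun z => (c z)⁻¹) (fun s => f s / c s) lam a u b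
          + ∫ x in a..b, f x / c x) / lam := by
  rw [eq_div_iff hlam, mul_comm, ← mul_integral_mul_forwardResolvent_of_continuousOn hab
    (φ := fun x => (c x)⁻¹) (hc.inv₀ hc0)
    (intervalIntegrable_div_of_integrableOn_Ioo hab hc hc0 hf)]
  exact congrArg _ (intervalIntegral.integral_congr fun x _ => div_eq_inv_mul _ _)

theorem integral_div_backwardResolvent (hab : a ≤ b) (hc : ContinuousOn c (Icc a b))
    (hc0 : ∀ x ∈ Icc a b, c x ≠ 0) (hf : IntegrableOn f (Ioo a b)) (hlam : lam ≠ 0) :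
    ∫ x in a..b, backwardResolvent (fun z => (c z)⁻¹) (fun s => f s / c s) lam b u x / c x
      = (u - backwardResolvent (fun z => (c z)⁻¹) (fun s => f s / c s) lam b u a
          + ∫ x in a..b, f x / c x) / lam := by
  rw [eq_div_iff hlam, mul_comm, ← mul_integral_mul_backwardResolvent_of_continuousOn hab
    (φ := fun x => (c x)⁻¹) (hc.inv₀ hc0)
    (intervalIntegrable_div_of_integrableOn_Ioo hab hc hc0 hf)]
  exact congrArg _ (intervalIntegral.integral_congr fun x _ => div_eq_inv_mul _ _)

end Speed

end TransportResolvent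

theorem Matrix.sum_mulVec_eq_sum_col_sum_mul {m n R : Type*} [Fintype m] [Fintype n]
    [NonUnitalNonAssocSemiring R] (B : Matrix m n R) (y : n → R) :
    ∑ i, (B *ᵥ y) i = ∑ j, (∑ i, B i j) * y j := by
  simp only [mulVec, dotProduct, Finset.sum_mul]
  exact Finset.sum_comm

theorem sum_sub_add_div_eq_of_eq_mulVec {ι : Type*} [Fintype ι] {B : Matrix ι ι ℝ}
    {u y : ι → ℝ} (I : ι → ℝ) (lam : ℝ) (h : u = B *ᵥ y) :
    ∑ j, (u j - y j + I j) / lam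
      = 1 / lam * ∑ j, ((∑ i, B i j) - 1) * y j + 1 / lam * ∑ j, I j := by
  rw [← Finset.sum_div, Finset.sum_add_distrib, Finset.sum_sub_distrib, h,
    Matrix.sum_mulVec_eq_sum_col_sum_mul]
  simp only [sub_mul, one_mul, Finset.sum_sub_distrib]
  ring

theorem resolvent_weighted_norm_identity_general
    {Jp Jm : Type*} [Fintype Jp] [Fintype Jm] [DecidableEq Jp] [DecidableEq Jm]
    (c : Jp ⊕ Jm → ℝ → ℝ)
    (hc_cont : ∀ j, ContinuousOn (c j) (Set.Icc 0 1))
    (hc_pos : ∀ j, ∀ x ∈ Set.Icc (0:ℝ) 1, 0 < c j x)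
    (lam : ℝ) (hlam : 0 < lam)
    (elam : (Jp ⊕ Jm) → ℝ → ℝ → ℝ)
    (helam : ∀ j a b, elam j a b = Real.exp (-(lam * ∫ z in a..b, (c j z)⁻¹)))
    (B : Matrix (Jp ⊕ Jm) (Jp ⊕ Jm) ℝ)
    (mE : Matrix (Jp ⊕ Jm) (Jp ⊕ Jm) ℝ)
    (hmE : mE = Matrix.diagonal fun j => elam j 0 1)
    (f : (Jp ⊕ Jm) → ℝ → ℝ)
    (hf_int : ∀ j, IntegrableOn (f j) (Set.Ioo 0 1))
    (FF : (Jp ⊕ Jm) → ℝ)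
    (hFF : FF = Sum.elim
      (fun j : Jp => ∫ s in (0:ℝ)..1,
        elam (Sum.inl j) s 1 * (f (Sum.inl j) s / c (Sum.inl j) s))
      (fun j : Jm => ∫ s in (0:ℝ)..1,
        elam (Sum.inr j) 0 s * (f (Sum.inr j) s / c (Sum.inr j) s)))
    (u0 : (Jp ⊕ Jm) → ℝ)
    (hu0 : (1 - B * mE).mulVec u0 = B.mulVec FF)
    (v : Jp → ℝ → ℝ)
    (hv : ∀ j, v j = fun x => elam (Sum.inl j) 0 x * u0 (Sum.inl j)
      + ∫ s in (0:ℝ)..x, elam (Sum.inl j) s x * (f (Sum.inl j) s / c (Sum.inl j) s))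
    (w : Jm → ℝ → ℝ)
    (hw : ∀ j, w j = fun x => elam (Sum.inr j) x 1 * u0 (Sum.inr j)
      + ∫ s in x..(1:ℝ), elam (Sum.inr j) x s * (f (Sum.inr j) s / c (Sum.inr j) s)) :
    (∑ j : Jp, ∫ x in (0:ℝ)..1, v j x / c (Sum.inl j) x)
      + (∑ j : Jm, ∫ x in (0:ℝ)..1, w j x / c (Sum.inr j) x) =
    (1 / lam) * (∑ j : Jp,
        (((∑ i : Jp, B (Sum.inl i) (Sum.inl j)) + (∑ i : Jm, B (Sum.inr i) (Sum.inl j))) - 1)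
          * (u0 (Sum.inl j) * elam (Sum.inl j) 0 1
            + ∫ s in (0:ℝ)..1, elam (Sum.inl j) s 1 * (f (Sum.inl j) s / c (Sum.inl j) s)))
    + (1 / lam) * (∑ j : Jm,
        (((∑ i : Jp, B (Sum.inl i) (Sum.inr j)) + (∑ i : Jm, B (Sum.inr i) (Sum.inr j))) - 1)
          * (u0 (Sum.inr j) * elam (Sum.inr j) 0 1
            + ∫ s in (0:ℝ)..1, elam (Sum.inr j) 0 s * (f (Sum.inr j) s / c (Sum.inr j) s)))
    + (1 / lam) * (∑ j : Jp ⊕ Jm, ∫ x in (0:ℝ)..1, f j x / c j x) := by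
  set y : Jp ⊕ Jm → ℝ := fun j => elam j 0 1 * u0 j + FF j
  have hc0 j : ∀ x ∈ Icc (0:ℝ) 1, c j x ≠ 0 := fun x hx => (hc_pos j x hx).ne'
  have hJp (j : Jp) : ∫ x in (0:ℝ)..1, v j x / c (Sum.inl j) x
      = (u0 (Sum.inl j) - y (Sum.inl j) + ∫ x in (0:ℝ)..1, f (Sum.inl j) x / c (Sum.inl j) x)
        / lam := by
    have hvj : v j = forwardResolvent (fun z => (c (.inl j) z)⁻¹)
        (fun s => f (.inl j) s / c (.inl j) s) lam 0 (u0 (.inl j)) := by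
      rw [hv j]; simp only [helam]; rfl
    rw [hvj, integral_div_forwardResolvent zero_le_one (hc_cont _) (hc0 _) (hf_int _) hlam.ne']
    simp only [y, hFF, forwardResolvent, helam, Sum.elim_inl, mul_comm]
  have hJm (j : Jm) : ∫ x in (0:ℝ)..1, w j x / c (Sum.inr j) x
      = (u0 (Sum.inr j) - y (Sum.inr j) + ∫ x in (0:ℝ)..1, f (Sum.inr j) x / c (Sum.inr j) x)
        / lam := by
    have hwj : w j = backwardResolvent (fun z => (c (.inr j) z)⁻¹)
        (fun s => f (.inr j) s / c (.inr j) s) lam 1 (u0 (.inr j)) := by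
      rw [hw j]; simp only [helam]; rfl
    rw [hwj, integral_div_backwardResolvent zero_le_one (hc_cont _) (hc0 _) (hf_int _) hlam.ne']
    simp only [y, hFF, backwardResolvent, helam, Sum.elim_inr, mul_comm]
  have hbc : u0 = B *ᵥ y := by
    have hEu : mE *ᵥ u0 + FF = y := by ext j; simp [hmE, y, mulVec_diagonal]
    rwa [sub_mulVec, one_mulVec, ← mulVec_mulVec, sub_eq_iff_eq_add', ← mulVec_add, hEu] at hu0
  have hyp (j : Jp) : u0 (.inl j) * elam (.inl j) 0 1
      + ∫ s in (0:ℝ)..1, elam (.inl j) s 1 * (f (.inl j) s / c (.inl j) s) = y (.inl j) := by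
    simp [y, hFF, mul_comm]
  have hym (j : Jm) : u0 (.inr j) * elam (.inr j) 0 1
      + ∫ s in (0:ℝ)..1, elam (.inr j) 0 s * (f (.inr j) s / c (.inr j) s) = y (.inr j) := by
    simp [y, hFF, mul_comm]
  have hbal := sum_sub_add_div_eq_of_eq_mulVec (fun j => ∫ x in (0:ℝ)..1, f j x / c j x) lam hbc
  simp only [Fintype.sum_sum_type] at hbal ⊢
  simp only [hJp, hJm, hyp, hym]
  linear_combination hbal

/-- **The weighted-norm resolvent identity (proof of Theorem 4.2).**
For a componentwise nonnegative boundary matrix `B` (in block form with respect to the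
splitting `J⁺ ⊕ J⁻`), positive continuous speeds `c_j`, `e_λ^j(a,b) = e^{-λ∫_a^b dz/c_j}`,
a componentwise a.e. nonnegative `f ∈ (L¹(0,1))^{2m}`, `λ > 0` large enough for the
Neumann series inversion of `I - B E_λ(0,1)` with nonnegative inverse, nonnegative
boundary data `(u⁰, w⁰)` determined by `(I - B E_λ)(u⁰,w⁰)ᵀ = B (∫ e_λ f/c …)ᵀ`, and the
resolvent components `v_j, w_j` given by the explicit formulas, the weighted norm
`‖(v,w)‖_c = ∑_{j∈J⁺} ∫₀¹ v_j/c_j + ∑_{j∈J⁻} ∫₀¹ w_j/c_j` satisfies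
`‖(v,w)‖_c = (1/λ) ∑_{j∈J⁺} (b_j^{11}+b_j^{21}-1)(u_j⁰ e_λ^j(0,1) + ∫₀¹ e_λ^j(s,1) f_j/c_j)
 + (1/λ) ∑_{j∈J⁻} (b_j^{12}+b_j^{22}-1)(w_j⁰ e_λ^j(0,1) + ∫₀¹ e_λ^j(0,s) f_j/c_j)
 + (1/λ)‖f‖_c`. -/
theorem resolvent_weighted_norm_identity
    {Jp Jm : Type*} [Fintype Jp] [Fintype Jm] [DecidableEq Jp] [DecidableEq Jm] (m : ℕ)
    (hcard : Fintype.card Jp + Fintype.card Jm = 2 * m)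
    (c : Jp ⊕ Jm → ℝ → ℝ)
    (hc_cont : ∀ j, ContinuousOn (c j) (Set.Icc 0 1))
    (hc_pos : ∀ j, ∀ x ∈ Set.Icc (0:ℝ) 1, 0 < c j x)
    (lam : ℝ) (hlam : 0 < lam)
    (elam : (Jp ⊕ Jm) → ℝ → ℝ → ℝ)
    (helam : ∀ j a b, elam j a b = Real.exp (-(lam * ∫ z in a..b, (c j z)⁻¹)))
    (B : Matrix (Jp ⊕ Jm) (Jp ⊕ Jm) ℝ) (hB : ∀ i j, 0 ≤ B i j)
    (mE : Matrix (Jp ⊕ Jm) (Jp ⊕ Jm) ℝ)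
    (hmE : mE = Matrix.diagonal fun j => elam j 0 1)
    -- `λ` is large enough: `I - B E_λ(0,1)` is invertible and its inverse is given by
    -- the (componentwise nonnegative) Neumann series
    (hinv : IsUnit (1 - B * mE))
    (hNeumann : (1 - B * mE)⁻¹ = ∑' k : ℕ, (B * mE) ^ k)
    (hinv_nonneg : ∀ i j, 0 ≤ (1 - B * mE)⁻¹ i j)
    (f : (Jp ⊕ Jm) → ℝ → ℝ)
    (hf_int : ∀ j, IntegrableOn (f j) (Set.Ioo 0 1))
    (hf_nonneg : ∀ j, ∀ᵐ x ∂(volume.restrict (Set.Ioo (0:ℝ) 1)), 0 ≤ f j x)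
    (FF : (Jp ⊕ Jm) → ℝ)
    (hFF : FF = Sum.elim
      (fun j : Jp => ∫ s in (0:ℝ)..1,
        elam (Sum.inl j) s 1 * (f (Sum.inl j) s / c (Sum.inl j) s))
      (fun j : Jm => ∫ s in (0:ℝ)..1,
        elam (Sum.inr j) 0 s * (f (Sum.inr j) s / c (Sum.inr j) s)))
    (u0 : (Jp ⊕ Jm) → ℝ) (hu0_nonneg : ∀ i, 0 ≤ u0 i)
    (hu0 : (1 - B * mE).mulVec u0 = B.mulVec FF)
    (v : Jp → ℝ → ℝ)
    (hv : ∀ j, v j = fun x => elam (Sum.inl j) 0 x * u0 (Sum.inl j)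
      + ∫ s in (0:ℝ)..x, elam (Sum.inl j) s x * (f (Sum.inl j) s / c (Sum.inl j) s))
    (w : Jm → ℝ → ℝ)
    (hw : ∀ j, w j = fun x => elam (Sum.inr j) x 1 * u0 (Sum.inr j)
      + ∫ s in x..(1:ℝ), elam (Sum.inr j) x s * (f (Sum.inr j) s / c (Sum.inr j) s)) :
    (∑ j : Jp, ∫ x in (0:ℝ)..1, v j x / c (Sum.inl j) x)
      + (∑ j : Jm, ∫ x in (0:ℝ)..1, w j x / c (Sum.inr j) x) =
    (1 / lam) * (∑ j : Jp,
        (((∑ i : Jp, B (Sum.inl i) (Sum.inl j)) + (∑ i : Jm, B (Sum.inr i) (Sum.inl j))) - 1)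
          * (u0 (Sum.inl j) * elam (Sum.inl j) 0 1
            + ∫ s in (0:ℝ)..1, elam (Sum.inl j) s 1 * (f (Sum.inl j) s / c (Sum.inl j) s)))
    + (1 / lam) * (∑ j : Jm,
        (((∑ i : Jp, B (Sum.inl i) (Sum.inr j)) + (∑ i : Jm, B (Sum.inr i) (Sum.inr j))) - 1)
          * (u0 (Sum.inr j) * elam (Sum.inr j) 0 1
            + ∫ s in (0:ℝ)..1, elam (Sum.inr j) 0 s * (f (Sum.inr j) s / c (Sum.inr j) s)))
    + (1 / lam) * (∑ j : Jp ⊕ Jm, ∫ x in (0:ℝ)..1, f j x / c j x) :=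
  resolvent_weighted_norm_identity_general c hc_cont hc_pos lam hlam elam helam B mE hmE f hf_int FF
    hFF u0 hu0 v hv w hw
end

section
/- In the setting of the resolvent norm identity for a componentwise nonnegative boundary matrix B (network transport resolvent (v,w) = R(λ, A_B) f for f ≥ 0 with weighted norm ‖(v,w)‖_c = Σ_{j∈J^+} ∫_0^1 v_j/c_j + Σ_{j∈J^−} ∫_0^1 w_j/c_j): (1) if b_j^{11} + b_j^{21} ≤ 1 for all j ∈ J^+ and b_j^{12} + b_j^{22} ≤ 1 for all j ∈ J^−, then ‖(v,w)‖_c ≤ (1/λ) ‖f‖_c; (2) if b_j^{11} + b_j^{21} ≥ 1 for all j ∈ J^+ and b_j^{12} + b_j^{22} ≥ 1 for all j ∈ J^−, then ‖(v,w)‖_c ≥ (1/λ) ‖f‖_c. -/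
/-!
On each edge the resolvent component solves a linear first-order equation: with rate `r = λ / c`
and source `g = f / c`, the forward component satisfies `v' = g - r v` and the backward one
`w' = r w - g`. The variation-of-constants formula shows that `v` and `w` are absolutely
continuous, so integrating the equation over the edge gives the mass balance
`λ ∫ v / c = v(0) + ∫ f / c - v(1)` (resp. `w(1) + ∫ f / c - w(0)`). Summing over all edges
and using the boundary condition, which says that the vector of incoming values is `B` applied
to the vector `out` of outgoing values, yields
`λ ‖(v, w)‖_c = ‖f‖_c + ∑ⱼ (bⱼ - 1) outⱼ` with `bⱼ` the `j`-th column sum of `B`.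
Since `out ≥ 0`, the sign of `bⱼ - 1` decides the inequality.
-/

open MeasureTheory Set Matrix intervalIntegral

/-- The paper's `e_λ(a, b)` is `attenuation (fun z => λ / c z) a b`. -/
noncomputable def attenuation (r : ℝ → ℝ) (a b : ℝ) : ℝ := Real.exp (-∫ z in a..b, r z)

/-- Variation of constants: the solution of `V' = h - φ' V` with `V p = exp (-φ p) * K`. -/
noncomputable def duhamel (φ h : ℝ → ℝ) (p K x : ℝ) : ℝ :=
  Real.exp (-φ x) * (K + ∫ s in p..x, Real.exp (φ s) * h s)

section
variable {a b : ℝ}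

theorem integral_mul_eq_sub_of_ae_hasDerivAt {V ρ h : ℝ → ℝ}
    (hV : AbsolutelyContinuousOnInterval V a b) (hh : IntervalIntegrable h volume a b)
    (hV' : ∀ᵐ x, x ∈ uIcc a b → HasDerivAt V (h x - ρ x * V x) x) :
    ∫ x in a..b, ρ x * V x = (∫ x in a..b, h x) - (V b - V a) := by
  rw [← hV.integral_deriv_eq_sub, ← integral_sub hh hV.intervalIntegrable_deriv]
  refine integral_congr_ae ?_
  filter_upwards [hV'] with x hx hxab
  rw [(hx (uIoc_subset_uIcc hxab)).deriv]
  ring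

variable {φ ρ h : ℝ → ℝ} {p : ℝ}

theorem absolutelyContinuousOnInterval_duhamel (hφ : ContDiff ℝ 1 φ)
    (hh : IntervalIntegrable h volume a b) (hp : p ∈ uIcc a b) (K : ℝ) :
    AbsolutelyContinuousOnInterval (duhamel φ h p K) a b := by
  have hG : AbsolutelyContinuousOnInterval (fun x => Real.exp (-φ x)) a b :=
    (Real.contDiff_exp.comp hφ.neg).contDiffOn.absolutelyContinuousOnInterval
  have hJ :
      AbsolutelyContinuousOnInterval (fun x => K + ∫ s in p..x, Real.exp (φ s) * h s) a b :=
    (LipschitzWith.const K).lipschitzOnWith.absolutelyContinuousOnInterval.add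
      ((hh.continuousOn_mul (Real.continuous_exp.comp hφ.continuous).continuousOn)
        |>.absolutelyContinuousOnInterval_intervalIntegral hp)
  exact hG.fun_mul hJ

theorem ae_hasDerivAt_duhamel (hφ : ∀ x, HasDerivAt φ (ρ x) x)
    (hh : IntervalIntegrable h volume a b) (hp : p ∈ uIcc a b) (K : ℝ) :
    ∀ᵐ x, x ∈ uIcc a b →
      HasDerivAt (duhamel φ h p K) (h x - ρ x * duhamel φ h p K x) x := by
  have hφc : Continuous φ := continuous_iff_continuousAt.2 fun x => (hφ x).continuousAt
  filter_upwards [(hh.continuousOn_mul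
    (Real.continuous_exp.comp hφc).continuousOn).ae_hasDerivAt_integral] with x hx hxab
  have hexp : Real.exp (-φ x) * Real.exp (φ x) = 1 := by
    rw [← Real.exp_add, neg_add_cancel, Real.exp_zero]
  refine (((hφ x).fun_neg.exp).fun_mul ((hx hxab p hp).const_add K)).congr_deriv ?_
  simp only [duhamel, Function.comp_apply]
  linear_combination (h x) * hexp

theorem integral_mul_duhamel (hφ : ∀ x, HasDerivAt φ (ρ x) x) (hρ : Continuous ρ)
    (hh : IntervalIntegrable h volume a b) (hp : p ∈ uIcc a b) (K : ℝ) :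
    ∫ x in a..b, ρ x * duhamel φ h p K x
      = (∫ x in a..b, h x) - (duhamel φ h p K b - duhamel φ h p K a) := by
  have hderiv : deriv φ = ρ := funext fun x => (hφ x).deriv
  have hφ1 : ContDiff ℝ 1 φ :=
    contDiff_one_iff_deriv.2 ⟨fun x => (hφ x).differentiableAt, hderiv ▸ hρ⟩
  exact integral_mul_eq_sub_of_ae_hasDerivAt (absolutelyContinuousOnInterval_duhamel hφ1 hh hp K)
    hh (ae_hasDerivAt_duhamel hφ hh hp K)

end

/-- The resolvent components `v_j`, `w_j` of the paper are `forwardSolution` and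
`backwardSolution` with rate `λ / c_j`, source `f_j / c_j` and boundary value `u_j`. -/
noncomputable def forwardSolution (r g : ℝ → ℝ) (a u x : ℝ) : ℝ :=
  attenuation r a x * u + ∫ s in a..x, attenuation r s x * g s

noncomputable def backwardSolution (r g : ℝ → ℝ) (b u x : ℝ) : ℝ :=
  attenuation r x b * u + ∫ s in x..b, attenuation r x s * g s

section
variable {r g : ℝ → ℝ} {a b : ℝ}

@[simp]
theorem attenuation_self (r : ℝ → ℝ) (a : ℝ) : attenuation r a a = 1 := by
  simp [attenuation]

theorem forwardSolution_eq_duhamel (hr : Continuous r) (u : ℝ) :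
    forwardSolution r g a u = duhamel (fun x => ∫ z in a..x, r z) g a u := by
  funext x
  rw [forwardSolution, duhamel, mul_add, ← intervalIntegral.integral_const_mul]
  refine congrArg₂ (· + ·) rfl (integral_congr fun s _ => ?_)
  rw [attenuation, ← integral_interval_sub_left (hr.intervalIntegrable a x)
    (hr.intervalIntegrable a s), neg_sub, sub_eq_add_neg, Real.exp_add]
  ring

theorem backwardSolution_eq_duhamel (hr : Continuous r) (u : ℝ) :
    backwardSolution r g b u = duhamel (fun x => ∫ z in x..b, r z) (-g) b u := by
  funext x
  rw [backwardSolution, duhamel, mul_add, integral_symm x b]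
  simp only [Pi.neg_apply, mul_neg, intervalIntegral.integral_neg, neg_neg,
    ← intervalIntegral.integral_const_mul]
  refine congrArg₂ (· + ·) rfl (integral_congr fun s _ => ?_)
  rw [attenuation, ← integral_add_adjacent_intervals (hr.intervalIntegrable x s)
    (hr.intervalIntegrable s b), neg_add, Real.exp_add, Real.exp_neg (∫ z in s..b, r z)]
  field_simp

@[simp]
theorem forwardSolution_self (r g : ℝ → ℝ) (a u : ℝ) : forwardSolution r g a u a = u := by
  simp [forwardSolution]

@[simp]
theorem backwardSolution_self (r g : ℝ → ℝ) (b u : ℝ) : backwardSolution r g b u b = u := by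
  simp [backwardSolution]

theorem integral_mul_forwardSolution_of_continuous (hr : Continuous r)
    (hg : IntervalIntegrable g volume a b) (u : ℝ) :
    ∫ x in a..b, r x * forwardSolution r g a u x
      = u + (∫ x in a..b, g x) - forwardSolution r g a u b := by
  have h := integral_mul_duhamel (fun x => (hr.integral_hasStrictDerivAt a x).hasDerivAt) hr hg
    left_mem_uIcc u
  rw [← forwardSolution_eq_duhamel hr, forwardSolution_self] at h
  rw [h]
  ring

theorem integral_mul_backwardSolution_of_continuous (hr : Continuous r)
    (hg : IntervalIntegrable g volume a b) (u : ℝ) :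
    ∫ x in a..b, r x * backwardSolution r g b u x
      = u + (∫ x in a..b, g x) - backwardSolution r g b u a := by
  have hφ : ∀ x, HasDerivAt (fun x => ∫ z in x..b, r z) (-r x) x := fun x =>
    integral_hasDerivAt_left (hr.intervalIntegrable x b) (hr.stronglyMeasurableAtFilter _ _)
      hr.continuousAt
  have h := integral_mul_duhamel hφ hr.neg hg.neg right_mem_uIcc u
  rw [← backwardSolution_eq_duhamel hr, backwardSolution_self] at h
  simp only [neg_mul, Pi.neg_apply, intervalIntegral.integral_neg] at h
  linarith

theorem ContinuousOn.exists_continuous_eqOn_uIcc (hr : ContinuousOn r (uIcc a b)) :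
    ∃ r' : ℝ → ℝ, Continuous r' ∧ EqOn r r' (uIcc a b) :=
  ⟨fun z => r (projIcc (a ⊓ b) (a ⊔ b) inf_le_sup z),
    hr.comp_continuous (continuous_subtype_val.comp continuous_projIcc)
      fun z => (projIcc _ _ _ z).2,
    fun x hx => by simp only [projIcc_of_mem _ hx]⟩

theorem attenuation_congr {r' : ℝ → ℝ} {s x : ℝ} (h : EqOn r r' (uIcc s x)) :
    attenuation r s x = attenuation r' s x := by
  rw [attenuation, attenuation, integral_congr h]

theorem forwardSolution_congr {r' : ℝ → ℝ} (h : EqOn r r' (uIcc a b)) (u : ℝ) :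
    EqOn (forwardSolution r g a u) (forwardSolution r' g a u) (uIcc a b) := by
  intro x hx
  have hax : uIcc a x ⊆ uIcc a b := uIcc_subset_uIcc left_mem_uIcc hx
  rw [forwardSolution, forwardSolution, attenuation_congr (h.mono hax)]
  refine congrArg₂ (· + ·) rfl (integral_congr fun s hs => ?_)
  rw [attenuation_congr (h.mono ((uIcc_subset_uIcc (hax hs) (hax right_mem_uIcc))))]

theorem backwardSolution_congr {r' : ℝ → ℝ} (h : EqOn r r' (uIcc a b)) (u : ℝ) :
    EqOn (backwardSolution r g b u) (backwardSolution r' g b u) (uIcc a b) := by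
  intro x hx
  have hxb : uIcc x b ⊆ uIcc a b := uIcc_subset_uIcc hx right_mem_uIcc
  rw [backwardSolution, backwardSolution, attenuation_congr (h.mono hxb)]
  refine congrArg₂ (· + ·) rfl (integral_congr fun s hs => ?_)
  rw [attenuation_congr (h.mono ((uIcc_subset_uIcc (hxb left_mem_uIcc) (hxb hs))))]

theorem integral_mul_forwardSolution (hr : ContinuousOn r (uIcc a b))
    (hg : IntervalIntegrable g volume a b) (u : ℝ) :
    ∫ x in a..b, r x * forwardSolution r g a u x
      = u + (∫ x in a..b, g x) - forwardSolution r g a u b := by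
  obtain ⟨r', hr', hrr'⟩ := hr.exists_continuous_eqOn_uIcc
  have hsol := forwardSolution_congr (g := g) hrr' u
  rw [integral_congr fun x hx => by rw [hrr' hx, hsol hx], hsol right_mem_uIcc]
  exact integral_mul_forwardSolution_of_continuous hr' hg u

theorem integral_mul_backwardSolution (hr : ContinuousOn r (uIcc a b))
    (hg : IntervalIntegrable g volume a b) (u : ℝ) :
    ∫ x in a..b, r x * backwardSolution r g b u x
      = u + (∫ x in a..b, g x) - backwardSolution r g b u a := by
  obtain ⟨r', hr', hrr'⟩ := hr.exists_continuous_eqOn_uIcc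
  have hsol := backwardSolution_congr (g := g) hrr' u
  rw [integral_congr fun x hx => by rw [hrr' hx, hsol hx], hsol left_mem_uIcc]
  exact integral_mul_backwardSolution_of_continuous hr' hg u

end

section
variable {a b lam u : ℝ} {c f V : ℝ → ℝ} {e : ℝ → ℝ → ℝ}

theorem mass_balance_forward (hab : a ≤ b) (hc : ContinuousOn c (Icc a b))
    (hc_pos : ∀ x ∈ Icc a b, 0 < c x) (hf : IntegrableOn f (Ioo a b))
    (he : ∀ s x, e s x = Real.exp (-(lam * ∫ z in s..x, (c z)⁻¹)))
    (hV : V = fun x => e a x * u + ∫ s in a..x, e s x * (f s / c s)) :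
    lam * ∫ x in a..b, V x / c x = u + (∫ x in a..b, f x / c x) - V b := by
  have hVsol : V = forwardSolution (fun z => lam * (c z)⁻¹) (fun s => f s / c s) a u := by
    funext x
    simp only [hV, he, forwardSolution, attenuation, intervalIntegral.integral_const_mul]
  have hcinv : ContinuousOn (fun z => (c z)⁻¹) (uIcc a b) :=
    uIcc_of_le hab ▸ hc.inv₀ fun x hx => (hc_pos x hx).ne'
  have hfc : IntervalIntegrable (fun s => f s / c s) volume a b := by
    simpa only [div_eq_mul_inv] using
      ((intervalIntegrable_iff_integrableOn_Ioo_of_le hab).2 hf).mul_continuousOn hcinv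
  rw [← intervalIntegral.integral_const_mul, hVsol,
    ← integral_mul_forwardSolution (r := fun z => lam * (c z)⁻¹)
      (continuousOn_const.mul hcinv) hfc u]
  exact integral_congr fun x _ => by ring

theorem mass_balance_backward (hab : a ≤ b) (hc : ContinuousOn c (Icc a b))
    (hc_pos : ∀ x ∈ Icc a b, 0 < c x) (hf : IntegrableOn f (Ioo a b))
    (he : ∀ s x, e s x = Real.exp (-(lam * ∫ z in s..x, (c z)⁻¹)))
    (hV : V = fun x => e x b * u + ∫ s in x..b, e x s * (f s / c s)) :
    lam * ∫ x in a..b, V x / c x = u + (∫ x in a..b, f x / c x) - V a := by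
  have hVsol : V = backwardSolution (fun z => lam * (c z)⁻¹) (fun s => f s / c s) b u := by
    funext x
    simp only [hV, he, backwardSolution, attenuation, intervalIntegral.integral_const_mul]
  have hcinv : ContinuousOn (fun z => (c z)⁻¹) (uIcc a b) :=
    uIcc_of_le hab ▸ hc.inv₀ fun x hx => (hc_pos x hx).ne'
  have hfc : IntervalIntegrable (fun s => f s / c s) volume a b := by
    simpa only [div_eq_mul_inv] using
      ((intervalIntegrable_iff_integrableOn_Ioo_of_le hab).2 hf).mul_continuousOn hcinv
  rw [← intervalIntegral.integral_const_mul, hVsol,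
    ← integral_mul_backwardSolution (r := fun z => lam * (c z)⁻¹)
      (continuousOn_const.mul hcinv) hfc u]
  exact integral_congr fun x _ => by ring

theorem integral_mul_div_nonneg (hab : a ≤ b) {k : ℝ → ℝ} (hk : ∀ s, 0 ≤ k s)
    (hc_pos : ∀ x ∈ Icc a b, 0 < c x) (hf : ∀ᵐ x ∂volume.restrict (Ioo a b), 0 ≤ f x) :
    0 ≤ ∫ s in a..b, k s * (f s / c s) := by
  refine integral_nonneg_of_ae_restrict hab ?_
  rw [← Measure.restrict_congr_set Ioo_ae_eq_Icc]
  filter_upwards [hf, ae_restrict_mem measurableSet_Ioo] with x hfx hx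
  exact mul_nonneg (hk x) (div_nonneg hfx (hc_pos x (Ioo_subset_Icc_self hx)).le)

theorem exit_nonneg_forward (hab : a ≤ b) (hu : 0 ≤ u) (hc_pos : ∀ x ∈ Icc a b, 0 < c x)
    (hf : ∀ᵐ x ∂volume.restrict (Ioo a b), 0 ≤ f x)
    (he : ∀ s x, e s x = Real.exp (-(lam * ∫ z in s..x, (c z)⁻¹)))
    (hV : V = fun x => e a x * u + ∫ s in a..x, e s x * (f s / c s)) : 0 ≤ V b := by
  have he_pos : ∀ s x, 0 < e s x := fun s x => he s x ▸ Real.exp_pos _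
  rw [hV]
  exact add_nonneg (mul_nonneg (he_pos a b).le hu)
    (integral_mul_div_nonneg hab (fun s => (he_pos s b).le) hc_pos hf)

theorem exit_nonneg_backward (hab : a ≤ b) (hu : 0 ≤ u) (hc_pos : ∀ x ∈ Icc a b, 0 < c x)
    (hf : ∀ᵐ x ∂volume.restrict (Ioo a b), 0 ≤ f x)
    (he : ∀ s x, e s x = Real.exp (-(lam * ∫ z in s..x, (c z)⁻¹)))
    (hV : V = fun x => e x b * u + ∫ s in x..b, e x s * (f s / c s)) : 0 ≤ V a := by
  have he_pos : ∀ s x, 0 < e s x := fun s x => he s x ▸ Real.exp_pos _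
  rw [hV]
  exact add_nonneg (mul_nonneg (he_pos a b).le hu)
    (integral_mul_div_nonneg hab (fun s => (he_pos a s).le) hc_pos hf)

end

section
variable {m n : Type*} [Fintype m] [Fintype n]

theorem Matrix.sum_mulVec_eq_sum_colSum_mul (B : Matrix m n ℝ) (y : n → ℝ) :
    ∑ i, (B *ᵥ y) i = ∑ j, (∑ i, B i j) * y j := by
  simp only [mulVec, dotProduct, Finset.sum_mul]
  exact Finset.sum_comm

theorem Matrix.sum_mulVec_le_sum_of_colSum_le_one (B : Matrix m n ℝ) {y : n → ℝ}
    (hy : 0 ≤ y) (hB : ∀ j, ∑ i, B i j ≤ 1) : ∑ i, (B *ᵥ y) i ≤ ∑ j, y j := by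
  rw [sum_mulVec_eq_sum_colSum_mul]
  exact Finset.sum_le_sum fun j _ => mul_le_of_le_one_left (hy j) (hB j)

theorem Matrix.sum_le_sum_mulVec_of_one_le_colSum (B : Matrix m n ℝ) {y : n → ℝ}
    (hy : 0 ≤ y) (hB : ∀ j, 1 ≤ ∑ i, B i j) : ∑ j, y j ≤ ∑ i, (B *ᵥ y) i := by
  rw [sum_mulVec_eq_sum_colSum_mul]
  exact Finset.sum_le_sum fun j _ => le_mul_of_one_le_left (hy j) (hB j)

end

theorem Matrix.eq_mulVec_add_of_one_sub_mul_mulVec_eq {n α : Type*} [Fintype n] [DecidableEq n]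
    [Ring α] {B M : Matrix n n α} {u F : n → α} (h : (1 - B * M) *ᵥ u = B *ᵥ F) :
    u = B *ᵥ (M *ᵥ u + F) := by
  rw [sub_mulVec, one_mulVec, ← mulVec_mulVec, sub_eq_iff_eq_add] at h
  rw [mulVec_add, add_comm]
  exact h

theorem resolvent_weighted_norm_estimates_general
    {Jp Jm : Type*} [Fintype Jp] [Fintype Jm] [DecidableEq Jp] [DecidableEq Jm]
    (c : Jp ⊕ Jm → ℝ → ℝ)
    (hc_cont : ∀ j, ContinuousOn (c j) (Set.Icc 0 1))
    (hc_pos : ∀ j, ∀ x ∈ Set.Icc (0:ℝ) 1, 0 < c j x)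
    (lam : ℝ) (hlam : 0 < lam)
    (elam : (Jp ⊕ Jm) → ℝ → ℝ → ℝ)
    (helam : ∀ j a b, elam j a b = Real.exp (-(lam * ∫ z in a..b, (c j z)⁻¹)))
    (B : Matrix (Jp ⊕ Jm) (Jp ⊕ Jm) ℝ)
    (mE : Matrix (Jp ⊕ Jm) (Jp ⊕ Jm) ℝ)
    (hmE : mE = Matrix.diagonal fun j => elam j 0 1)
    (f : (Jp ⊕ Jm) → ℝ → ℝ)
    (hf_int : ∀ j, IntegrableOn (f j) (Set.Ioo 0 1))
    (hf_nonneg : ∀ j, ∀ᵐ x ∂(volume.restrict (Set.Ioo (0:ℝ) 1)), 0 ≤ f j x)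
    (FF : (Jp ⊕ Jm) → ℝ)
    (hFF : FF = Sum.elim
      (fun j : Jp => ∫ s in (0:ℝ)..1,
        elam (Sum.inl j) s 1 * (f (Sum.inl j) s / c (Sum.inl j) s))
      (fun j : Jm => ∫ s in (0:ℝ)..1,
        elam (Sum.inr j) 0 s * (f (Sum.inr j) s / c (Sum.inr j) s)))
    (u0 : (Jp ⊕ Jm) → ℝ) (hu0_nonneg : ∀ i, 0 ≤ u0 i)
    (hu0 : (1 - B * mE).mulVec u0 = B.mulVec FF)
    (v : Jp → ℝ → ℝ)
    (hv : ∀ j, v j = fun x => elam (Sum.inl j) 0 x * u0 (Sum.inl j)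
      + ∫ s in (0:ℝ)..x, elam (Sum.inl j) s x * (f (Sum.inl j) s / c (Sum.inl j) s))
    (w : Jm → ℝ → ℝ)
    (hw : ∀ j, w j = fun x => elam (Sum.inr j) x 1 * u0 (Sum.inr j)
      + ∫ s in x..(1:ℝ), elam (Sum.inr j) x s * (f (Sum.inr j) s / c (Sum.inr j) s)) :
    -- Case 1: contractive resolvent
    ((∀ j : Jp, (∑ i : Jp, B (Sum.inl i) (Sum.inl j))
        + (∑ i : Jm, B (Sum.inr i) (Sum.inl j)) ≤ 1) →
     (∀ j : Jm, (∑ i : Jp, B (Sum.inl i) (Sum.inr j))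
        + (∑ i : Jm, B (Sum.inr i) (Sum.inr j)) ≤ 1) →
      (∑ j : Jp, ∫ x in (0:ℝ)..1, v j x / c (Sum.inl j) x)
        + (∑ j : Jm, ∫ x in (0:ℝ)..1, w j x / c (Sum.inr j) x) ≤
        (1 / lam) * (∑ j : Jp ⊕ Jm, ∫ x in (0:ℝ)..1, f j x / c j x)) ∧
    -- Case 2: expansive resolvent
    ((∀ j : Jp, 1 ≤ (∑ i : Jp, B (Sum.inl i) (Sum.inl j))
        + (∑ i : Jm, B (Sum.inr i) (Sum.inl j))) →
     (∀ j : Jm, 1 ≤ (∑ i : Jp, B (Sum.inl i) (Sum.inr j))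
        + (∑ i : Jm, B (Sum.inr i) (Sum.inr j))) →
      (1 / lam) * (∑ j : Jp ⊕ Jm, ∫ x in (0:ℝ)..1, f j x / c j x) ≤
        (∑ j : Jp, ∫ x in (0:ℝ)..1, v j x / c (Sum.inl j) x)
          + (∑ j : Jm, ∫ x in (0:ℝ)..1, w j x / c (Sum.inr j) x)) := by
  set out : Jp ⊕ Jm → ℝ := Sum.elim (fun j => v j 1) (fun j => w j 0)
  have hbc : u0 = B *ᵥ out := by
    convert eq_mulVec_add_of_one_sub_mul_mulVec_eq hu0 using 2
    funext j
    rcases j with j | j <;> simp [out, hv, hw, hFF, hmE, mulVec_diagonal]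
  have hout : 0 ≤ out := Sum.forall.2
    ⟨fun j => exit_nonneg_forward zero_le_one (hu0_nonneg _) (hc_pos _) (hf_nonneg _)
        (helam _) (hv j),
      fun j => exit_nonneg_backward zero_le_one (hu0_nonneg _) (hc_pos _) (hf_nonneg _)
        (helam _) (hw j)⟩
  have hbalance : lam * ((∑ j : Jp, ∫ x in (0:ℝ)..1, v j x / c (Sum.inl j) x)
        + (∑ j : Jm, ∫ x in (0:ℝ)..1, w j x / c (Sum.inr j) x))
      = ∑ j, u0 j + (∑ j, ∫ x in (0:ℝ)..1, f j x / c j x) - ∑ j, out j := by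
    simp only [Fintype.sum_sum_type, mul_add, Finset.mul_sum,
      mass_balance_forward zero_le_one (hc_cont _) (hc_pos _) (hf_int _) (helam _) (hv _),
      mass_balance_backward zero_le_one (hc_cont _) (hc_pos _) (hf_int _) (helam _) (hw _),
      Finset.sum_sub_distrib, Finset.sum_add_distrib, out, Sum.elim_inl, Sum.elim_inr]
    ring
  rw [hbc] at hbalance
  rw [one_div_mul_eq_div]
  refine ⟨fun h₁ h₂ => ?_, fun h₁ h₂ => ?_⟩
  · rw [le_div_iff₀' hlam]
    linarith [sum_mulVec_le_sum_of_colSum_le_one B hout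
      (by simpa only [Sum.forall, Fintype.sum_sum_type] using ⟨h₁, h₂⟩)]
  · rw [div_le_iff₀' hlam]
    linarith [sum_le_sum_mulVec_of_one_le_colSum B hout
      (by simpa only [Sum.forall, Fintype.sum_sum_type] using ⟨h₁, h₂⟩)]

/-- **Dissipativity / expansivity of the resolvent in the weighted norm
(Cases 1 and 2 in the proof of Theorem 4.2).**
In the setting of the resolvent norm identity for a componentwise nonnegative boundary
matrix `B` (network transport resolvent `(v,w) = R(λ,A_B) f` for `f ≥ 0` with weighted
norm `‖(v,w)‖_c = ∑_{j∈J⁺} ∫₀¹ v_j/c_j + ∑_{j∈J⁻} ∫₀¹ w_j/c_j`):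
(1) if `b_j^{11} + b_j^{21} ≤ 1` for all `j ∈ J⁺` and `b_j^{12} + b_j^{22} ≤ 1` for all
`j ∈ J⁻`, then `‖(v,w)‖_c ≤ (1/λ)‖f‖_c`;
(2) if `b_j^{11} + b_j^{21} ≥ 1` for all `j ∈ J⁺` and `b_j^{12} + b_j^{22} ≥ 1` for all
`j ∈ J⁻`, then `‖(v,w)‖_c ≥ (1/λ)‖f‖_c`. -/
theorem resolvent_weighted_norm_estimates
    {Jp Jm : Type*} [Fintype Jp] [Fintype Jm] [DecidableEq Jp] [DecidableEq Jm] (m : ℕ)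
    (hcard : Fintype.card Jp + Fintype.card Jm = 2 * m)
    (c : Jp ⊕ Jm → ℝ → ℝ)
    (hc_cont : ∀ j, ContinuousOn (c j) (Set.Icc 0 1))
    (hc_pos : ∀ j, ∀ x ∈ Set.Icc (0:ℝ) 1, 0 < c j x)
    (lam : ℝ) (hlam : 0 < lam)
    (elam : (Jp ⊕ Jm) → ℝ → ℝ → ℝ)
    (helam : ∀ j a b, elam j a b = Real.exp (-(lam * ∫ z in a..b, (c j z)⁻¹)))
    (B : Matrix (Jp ⊕ Jm) (Jp ⊕ Jm) ℝ) (hB : ∀ i j, 0 ≤ B i j)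
    (mE : Matrix (Jp ⊕ Jm) (Jp ⊕ Jm) ℝ)
    (hmE : mE = Matrix.diagonal fun j => elam j 0 1)
    (hinv : IsUnit (1 - B * mE))
    (hNeumann : (1 - B * mE)⁻¹ = ∑' k : ℕ, (B * mE) ^ k)
    (hinv_nonneg : ∀ i j, 0 ≤ (1 - B * mE)⁻¹ i j)
    (f : (Jp ⊕ Jm) → ℝ → ℝ)
    (hf_int : ∀ j, IntegrableOn (f j) (Set.Ioo 0 1))
    (hf_nonneg : ∀ j, ∀ᵐ x ∂(volume.restrict (Set.Ioo (0:ℝ) 1)), 0 ≤ f j x)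
    (FF : (Jp ⊕ Jm) → ℝ)
    (hFF : FF = Sum.elim
      (fun j : Jp => ∫ s in (0:ℝ)..1,
        elam (Sum.inl j) s 1 * (f (Sum.inl j) s / c (Sum.inl j) s))
      (fun j : Jm => ∫ s in (0:ℝ)..1,
        elam (Sum.inr j) 0 s * (f (Sum.inr j) s / c (Sum.inr j) s)))
    (u0 : (Jp ⊕ Jm) → ℝ) (hu0_nonneg : ∀ i, 0 ≤ u0 i)
    (hu0 : (1 - B * mE).mulVec u0 = B.mulVec FF)
    (v : Jp → ℝ → ℝ)
    (hv : ∀ j, v j = fun x => elam (Sum.inl j) 0 x * u0 (Sum.inl j)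
      + ∫ s in (0:ℝ)..x, elam (Sum.inl j) s x * (f (Sum.inl j) s / c (Sum.inl j) s))
    (w : Jm → ℝ → ℝ)
    (hw : ∀ j, w j = fun x => elam (Sum.inr j) x 1 * u0 (Sum.inr j)
      + ∫ s in x..(1:ℝ), elam (Sum.inr j) x s * (f (Sum.inr j) s / c (Sum.inr j) s)) :
    -- Case 1: contractive resolvent
    ((∀ j : Jp, (∑ i : Jp, B (Sum.inl i) (Sum.inl j))
        + (∑ i : Jm, B (Sum.inr i) (Sum.inl j)) ≤ 1) →
     (∀ j : Jm, (∑ i : Jp, B (Sum.inl i) (Sum.inr j))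
        + (∑ i : Jm, B (Sum.inr i) (Sum.inr j)) ≤ 1) →
      (∑ j : Jp, ∫ x in (0:ℝ)..1, v j x / c (Sum.inl j) x)
        + (∑ j : Jm, ∫ x in (0:ℝ)..1, w j x / c (Sum.inr j) x) ≤
        (1 / lam) * (∑ j : Jp ⊕ Jm, ∫ x in (0:ℝ)..1, f j x / c j x)) ∧
    -- Case 2: expansive resolvent
    ((∀ j : Jp, 1 ≤ (∑ i : Jp, B (Sum.inl i) (Sum.inl j))
        + (∑ i : Jm, B (Sum.inr i) (Sum.inl j))) →
     (∀ j : Jm, 1 ≤ (∑ i : Jp, B (Sum.inl i) (Sum.inr j))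
        + (∑ i : Jm, B (Sum.inr i) (Sum.inr j))) →
      (1 / lam) * (∑ j : Jp ⊕ Jm, ∫ x in (0:ℝ)..1, f j x / c j x) ≤
        (∑ j : Jp, ∫ x in (0:ℝ)..1, v j x / c (Sum.inl j) x)
          + (∑ j : Jm, ∫ x in (0:ℝ)..1, w j x / c (Sum.inr j) x)) :=
  resolvent_weighted_norm_estimates_general c hc_cont hc_pos lam hlam elam helam B mE hmE f hf_int
    hf_nonneg FF hFF u0 hu0_nonneg hu0 v hv w hw
end

section
/- Let n ∈ ℕ, n = n_1 + n_2 with n_1, n_2 ≥ 0, let X be an n_1-dimensional subspace of ℝ^n with orthogonal complement X^⊥ (with respect to the standard inner product), let {a_r}_{r=1}^{n_1} be a basis of X and {b_s}_{s=1}^{n_2} a basis of X^⊥, and let K_j > 0 and L_j > 0 for j = 1, …, n. Then the n vectors (b_s^j K_j)_{j=1}^n, s = 1,…,n_2, together with (−a_r^j √(K_j L_j))_{j=1}^n, r = 1,…,n_1, form a basis of ℝ^n. In particular, the two families are mutually orthogonal with respect to the weighted inner product ⟨x, y⟩_w := Σ_{j=1}^n K_j^{−3/2} L_j^{−1/2}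 x_j y_j, and each family is linearly independent. -/
/-!
If `∑ γ_s b_s K + ∑ δ_r (-a_r) √(KL) = 0`, put `B = ∑ γ_s b_s ∈ X^⊥` and `A = ∑ δ_r a_r ∈ X`.
Then `B K = A √(KL)`, i.e. `A = √(K/L) B`, so `0 = ⟨A, B⟩ = ∑ √(K_j/L_j) B_j²` forces
`A = B = 0`. This gives `n` independent vectors in `ℝⁿ`. The weighted orthogonality holds
because the weight `K^{-3/2} L^{-1/2}` is the reciprocal of `K √(KL)`, reducing it to
`⟨a_r, b_s⟩ = 0`.
-/

open Finset Matrix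

section DiagonalScaling

variable {ι 𝕜 : Type*}

lemma ker_mulRight_eq_bot [Field 𝕜] {c : ι → 𝕜} (hc : ∀ j, c j ≠ 0) :
    LinearMap.ker (LinearMap.mulRight 𝕜 c) = ⊥ :=
  LinearMap.ker_eq_bot'.mpr fun _ hx => funext fun j =>
    (mul_eq_zero.mp (congrFun hx j)).resolve_right (hc j)

variable [Fintype ι] [Field 𝕜] [LinearOrder 𝕜] [IsStrictOrderedRing 𝕜]

lemma eq_zero_of_sum_mul_sq_eq_zero {w v : ι → 𝕜} (hw : ∀ j, 0 < w j)
    (h : ∑ j, w j * v j ^ 2 = 0) : v = 0 := by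
  have hterm :=
    (sum_eq_zero_iff_of_nonneg fun j _ => mul_nonneg (hw j).le (sq_nonneg (v j))).mp h
  exact funext fun j => pow_eq_zero_iff two_ne_zero |>.mp <|
    (mul_eq_zero.mp (hterm j (mem_univ j))).resolve_left (hw j).ne'

theorem disjoint_map_mulRight_of_orthogonal {X Y : Submodule 𝕜 (ι → 𝕜)}
    (hXY : ∀ x ∈ X, ∀ y ∈ Y, x ⬝ᵥ y = 0) {c d : ι → 𝕜} (hc : ∀ j, 0 < c j)
    (hd : ∀ j, 0 < d j) :
    Disjoint (X.map (LinearMap.mulRight 𝕜 c)) (Y.map (LinearMap.mulRight 𝕜 d)) := by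
  rw [Submodule.disjoint_def]
  rintro _ ⟨x, hx, rfl⟩ ⟨y, hy, hyx⟩
  have hx_eq : ∀ j, x j = d j / c j * y j := fun j => by
    have := congrFun hyx j
    simp only [LinearMap.mulRight_apply, Pi.mul_apply] at this
    field_simp [(hc j).ne']
    linarith
  have hy0 : y = 0 := by
    refine eq_zero_of_sum_mul_sq_eq_zero (fun j => div_pos (hd j) (hc j)) ?_
    rw [← hXY x hx y hy]
    exact sum_congr rfl fun j _ => by rw [hx_eq j]; ring
  rw [← hyx, hy0, map_zero]

theorem linearIndependent_sum_elim_mul_of_orthogonal {κ κ' : Type*}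
    {X Y : Submodule 𝕜 (ι → 𝕜)} (hXY : ∀ x ∈ X, ∀ y ∈ Y, x ⬝ᵥ y = 0)
    {u : κ → ι → 𝕜} {v : κ' → ι → 𝕜} (hu : LinearIndependent 𝕜 u)
    (hv : LinearIndependent 𝕜 v) (huX : ∀ k, u k ∈ X) (hvY : ∀ k, v k ∈ Y) {c d : ι → 𝕜}
    (hc : ∀ j, 0 < c j) (hd : ∀ j, 0 < d j) :
    LinearIndependent 𝕜 (Sum.elim (fun k => u k * c) (fun k => v k * d)) := by
  have hu' : LinearIndependent 𝕜 (fun k => u k * c) :=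
    hu.map' (LinearMap.mulRight 𝕜 c) (ker_mulRight_eq_bot fun j => (hc j).ne')
  have hv' : LinearIndependent 𝕜 (fun k => v k * d) :=
    hv.map' (LinearMap.mulRight 𝕜 d) (ker_mulRight_eq_bot fun j => (hd j).ne')
  refine hu'.sum_type hv' ?_
  refine (disjoint_map_mulRight_of_orthogonal hXY hc hd).mono ?_ ?_ <;>
    refine Submodule.span_le.mpr (Set.range_subset_iff.mpr fun k => ?_)
  exacts [Submodule.mem_map_of_mem (huX k), Submodule.mem_map_of_mem (hvY k)]

end DiagonalScaling

lemma rpow_neg_three_halves_mul_rpow_neg_half_mul_sqrt {K L : ℝ} (hK : 0 < K) (hL : 0 < L) :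
    K ^ (-(3:ℝ)/2) * L ^ (-(1:ℝ)/2) * (K * √(K * L)) = 1 := by
  rw [Real.sqrt_eq_rpow, Real.mul_rpow hK.le hL.le]
  calc K ^ (-(3:ℝ)/2) * L ^ (-(1:ℝ)/2) * (K * (K ^ (1/2:ℝ) * L ^ (1/2:ℝ)))
      = K ^ (-(3:ℝ)/2 + 1 + 1/2) * L ^ (-(1:ℝ)/2 + 1/2) := by
        rw [Real.rpow_add hK, Real.rpow_add hK, Real.rpow_add hL, Real.rpow_one]; ring
    _ = 1 := by norm_num

theorem nicaise_boundary_basis_general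
    (n n₁ n₂ : ℕ) (hn : n = n₁ + n₂)
    (X Xp : Submodule ℝ (Fin n → ℝ))
    (hXp : ∀ y : Fin n → ℝ, y ∈ Xp ↔ ∀ x ∈ X, ∑ j, x j * y j = 0)
    (a : Fin n₁ → (Fin n → ℝ))
    (ha_indep : LinearIndependent ℝ a)
    (ha_span : Submodule.span ℝ (Set.range a) = X)
    (b : Fin n₂ → (Fin n → ℝ))
    (hb_indep : LinearIndependent ℝ b)
    (hb_span : Submodule.span ℝ (Set.range b) = Xp)
    (K L : Fin n → ℝ) (hK : ∀ j, 0 < K j) (hL : ∀ j, 0 < L j) :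
    -- the combined family is a basis of ℝⁿ
    (LinearIndependent ℝ
        (Sum.elim (fun s : Fin n₂ => fun j => b s j * K j)
          (fun r : Fin n₁ => fun j => -(a r j) * Real.sqrt (K j * L j))) ∧
      Submodule.span ℝ (Set.range
        (Sum.elim (fun s : Fin n₂ => fun j => b s j * K j)
          (fun r : Fin n₁ => fun j => -(a r j) * Real.sqrt (K j * L j)))) = ⊤) ∧
    -- mutual orthogonality in the weighted inner product
    (∀ (s : Fin n₂) (r : Fin n₁),
      ∑ j, (K j) ^ (-(3:ℝ)/2) * (L j) ^ (-(1:ℝ)/2) *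
        ((b s j * K j) * (-(a r j) * Real.sqrt (K j * L j))) = 0) ∧
    -- each family is linearly independent
    LinearIndependent ℝ (fun s : Fin n₂ => fun j => b s j * K j) ∧
    LinearIndependent ℝ (fun r : Fin n₁ => fun j => -(a r j) * Real.sqrt (K j * L j)) := by
  have haX (r : Fin n₁) : a r ∈ X := ha_span ▸ Submodule.subset_span ⟨r, rfl⟩
  have hbXp (s : Fin n₂) : b s ∈ Xp := hb_span ▸ Submodule.subset_span ⟨s, rfl⟩
  have hXpX : ∀ y ∈ Xp, ∀ x ∈ X, y ⬝ᵥ x = 0 := fun y hy x hx => by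
    rw [dotProduct_comm]; exact (hXp y).mp hy x hx
  have hLI : LinearIndependent ℝ (Sum.elim (fun s : Fin n₂ => fun j => b s j * K j)
      (fun r : Fin n₁ => fun j => -(a r j) * Real.sqrt (K j * L j))) :=
    linearIndependent_sum_elim_mul_of_orthogonal hXpX hb_indep ha_indep.neg hbXp
      (fun r => X.neg_mem (haX r)) hK fun j => Real.sqrt_pos.mpr (mul_pos (hK j) (hL j))
  refine ⟨⟨hLI, hLI.span_eq_top_of_card_eq_finrank' (by simp [hn, add_comm])⟩,
    fun s r => ?_, hLI.comp _ Sum.inl_injective, hLI.comp _ Sum.inr_injective⟩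
  rw [← neg_zero, ← (hXp (b s)).mp (hbXp s) (a r) (haX r), ← sum_neg_distrib]
  refine sum_congr rfl fun j _ => ?_
  linear_combination (-(a r j * b s j)) *
    rpow_neg_three_halves_mul_rpow_neg_half_mul_sqrt (hK j) (hL j)

/-- **Solvability of the boundary system in Example 5.1 (Nicaise's model).**
Let `n = n₁ + n₂`, let `X` be an `n₁`-dimensional subspace of `ℝⁿ` with orthogonal
complement `Xp` (with respect to the standard inner product), let `a` be a basis of `X`
and `b` a basis of `Xp`, and let `K_j, L_j > 0`.  Then the `n` vectors
`(b_s^j K_j)_j` (`s = 1,…,n₂`) together with `(−a_r^j √(K_j L_j))_j` (`r = 1,…,n₁`)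
form a basis of `ℝⁿ`; in particular the two families are mutually orthogonal with
respect to the weighted inner product `⟨x,y⟩_w = ∑_j K_j^{-3/2} L_j^{-1/2} x_j y_j`, and
each family is linearly independent. -/
theorem nicaise_boundary_basis
    (n n₁ n₂ : ℕ) (hn : n = n₁ + n₂)
    (X Xp : Submodule ℝ (Fin n → ℝ))
    (hXdim : Module.finrank ℝ X = n₁)
    (hXp : ∀ y : Fin n → ℝ, y ∈ Xp ↔ ∀ x ∈ X, ∑ j, x j * y j = 0)
    (a : Fin n₁ → (Fin n → ℝ))
    (ha_indep : LinearIndependent ℝ a)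
    (ha_span : Submodule.span ℝ (Set.range a) = X)
    (b : Fin n₂ → (Fin n → ℝ))
    (hb_indep : LinearIndependent ℝ b)
    (hb_span : Submodule.span ℝ (Set.range b) = Xp)
    (K L : Fin n → ℝ) (hK : ∀ j, 0 < K j) (hL : ∀ j, 0 < L j) :
    -- the combined family is a basis of ℝⁿ
    (LinearIndependent ℝ
        (Sum.elim (fun s : Fin n₂ => fun j => b s j * K j)
          (fun r : Fin n₁ => fun j => -(a r j) * Real.sqrt (K j * L j))) ∧
      Submodule.span ℝ (Set.range
        (Sum.elim (fun s : Fin n₂ => fun j => b s j * K j)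
          (fun r : Fin n₁ => fun j => -(a r j) * Real.sqrt (K j * L j)))) = ⊤) ∧
    -- mutual orthogonality in the weighted inner product
    (∀ (s : Fin n₂) (r : Fin n₁),
      ∑ j, (K j) ^ (-(3:ℝ)/2) * (L j) ^ (-(1:ℝ)/2) *
        ((b s j * K j) * (-(a r j) * Real.sqrt (K j * L j))) = 0) ∧
    -- each family is linearly independent
    LinearIndependent ℝ (fun s : Fin n₂ => fun j => b s j * K j) ∧
    LinearIndependent ℝ (fun r : Fin n₁ => fun j => -(a r j) * Real.sqrt (K j * L j)) :=
  nicaise_boundary_basis_general n n₁ n₂ hn X Xp hXp a ha_indep ha_span b hb_indep hb_span K L hK hL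
end
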